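/- arXiv:1307.2794 — 2 statements merged into one kernel-verified Lean document; each statement's English description precedes it below -/
import Mathlib

section
/- Let $Q$ be a measurable set, $p : Q \to (1,\infty)$ measurable with $1 < p^- \leq p^+ < \infty$, and set $\mathcal{V} = L^{p(x)}(Q)$ with Luxemburg norm. Then for every $v \in \mathcal{V}$, the function $Zv := |v|^{p(x)-2}v$ belongs to $L^{p'(x)}(Q)$ and satisfies $\| |v|^{p(x)-2}v \|_{L^{p'(x)}(Q)} \leq (\|v\|_{L^{p(x)}(Q)} + 1)^{p^+ - 1}$. -/
/-!
Pointwise `|Zv|^{p'} = |v|^p`, so `Zv` has the same (finite) modular as `v`. With `c = ‖v‖ + 1`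
and `λ = c^{p⁺-1}`, the inequality `p ≤ (p⁺ - 1) p'` gives `λ^{p'(x)} ≥ c^{p(x)}`, so the
modular of `Zv / λ` is at most that of `v / c`, which is at most `1` because `c` exceeds the
Luxemburg norm of `v`.
-/

open MeasureTheory Filter Set
open scoped ENNReal Topology

noncomputable section

/-- The modular of a variable exponent Lebesgue space. -/
def vModular {α : Type*} [MeasurableSpace α] (μ : Measure α) (p : α → ℝ) (u : α → ℝ) : ℝ≥0∞ :=
  ∫⁻ x, ENNReal.ofReal (|u x| ^ p x) ∂μ

/-- Membership in the variable exponent Lebesgue space `L^{p(x)}`. -/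
def MemVLp {α : Type*} [MeasurableSpace α] (μ : Measure α) (p : α → ℝ) (u : α → ℝ) : Prop :=
  AEMeasurable u μ ∧ vModular μ p u < ⊤

/-- The Luxemburg norm on the variable exponent Lebesgue space. -/
def luxNorm {α : Type*} [MeasurableSpace α] (μ : Measure α) (p : α → ℝ) (u : α → ℝ) : ℝ :=
  sInf {lam : ℝ | 0 < lam ∧ vModular μ p (fun x => u x / lam) ≤ 1}

lemma abs_rpow_sub_two_mul_self_rpow_conj {r : ℝ} (hr : 1 < r) (t : ℝ) :
    |(|t| ^ (r - 2) * t)| ^ (r / (r - 1)) = |t| ^ r := by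
  rcases eq_or_ne t 0 with rfl | ht
  · rw [abs_zero, mul_zero, abs_zero, Real.zero_rpow (by positivity), Real.zero_rpow (by positivity)]
  have habs : |(|t| ^ (r - 2) * t)| = |t| ^ (r - 1) := by
    rw [abs_mul, abs_of_nonneg (by positivity), ← Real.rpow_add_one (abs_ne_zero.mpr ht)]
    ring_nf
  rw [habs, ← Real.rpow_mul (abs_nonneg t), mul_div_cancel₀ _ (sub_ne_zero.mpr hr.ne')]

lemma abs_rpow_sub_two_mul_self_div_rpow_conj_le {r s c : ℝ} (hr : 1 < r) (hrs : r ≤ s)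
    (hc : 1 ≤ c) (t : ℝ) :
    |(|t| ^ (r - 2) * t) / c ^ (s - 1)| ^ (r / (r - 1)) ≤ |t / c| ^ r := by
  have hc0 : 0 < c := one_pos.trans_le hc
  have hexp : r ≤ (s - 1) * (r / (r - 1)) := by
    rw [mul_div_assoc', le_div_iff₀ (by linarith)]
    nlinarith
  have hcs : 0 < c ^ (s - 1) := Real.rpow_pos_of_pos hc0 _
  rw [abs_div, abs_of_pos hcs, Real.div_rpow (abs_nonneg _) hcs.le,
    abs_rpow_sub_two_mul_self_rpow_conj hr, abs_div, abs_of_pos hc0,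
    Real.div_rpow (abs_nonneg _) hc0.le, ← Real.rpow_mul hc0.le]
  gcongr

section Luxemburg

variable {α : Type*} [MeasurableSpace α] {μ : Measure α} {p : α → ℝ}

lemma vModular_div_le_of_one_le {pm lam : ℝ} (hpm : ∀ᵐ x ∂μ, pm ≤ p x) (hlam : 1 ≤ lam)
    (u : α → ℝ) :
    vModular μ p (fun x => u x / lam) ≤ ENNReal.ofReal (lam ^ pm)⁻¹ * vModular μ p u := by
  have hlam0 : 0 < lam := one_pos.trans_le hlam
  rw [vModular, vModular, ← lintegral_const_mul' _ _ ENNReal.ofReal_ne_top]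
  refine lintegral_mono_ae ?_
  filter_upwards [hpm] with x hx
  rw [← ENNReal.ofReal_mul (by positivity)]
  refine ENNReal.ofReal_le_ofReal ?_
  rw [abs_div, abs_of_pos hlam0, Real.div_rpow (abs_nonneg _) hlam0.le, div_eq_inv_mul]
  gcongr

lemma luxNorm_admissible_nonempty {pm : ℝ} (hpm0 : 0 < pm) (hpm : ∀ᵐ x ∂μ, pm ≤ p x)
    {u : α → ℝ} (hu : vModular μ p u < ⊤) :
    {lam : ℝ | 0 < lam ∧ vModular μ p (fun x => u x / lam) ≤ 1}.Nonempty := by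
  set M := (vModular μ p u).toReal
  set lam := max 1 (M ^ (1 / pm))
  have hlam : 1 ≤ lam := le_max_left _ _
  have hM : M ≤ lam ^ pm := calc
    M = (M ^ (1 / pm)) ^ pm := by
      rw [← Real.rpow_mul ENNReal.toReal_nonneg, one_div_mul_cancel hpm0.ne', Real.rpow_one]
    _ ≤ lam ^ pm := by gcongr; exact le_max_right _ _
  refine ⟨lam, one_pos.trans_le hlam, (vModular_div_le_of_one_le hpm hlam u).trans ?_⟩
  rw [← ENNReal.ofReal_toReal hu.ne, ← ENNReal.ofReal_mul (by positivity)]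
  exact ENNReal.ofReal_le_one.mpr (inv_mul_le_one_of_le₀ hM (by positivity))

lemma vModular_div_anti (hp : ∀ᵐ x ∂μ, 0 ≤ p x) (u : α → ℝ) {a b : ℝ} (ha : 0 < a)
    (hab : a ≤ b) : vModular μ p (fun x => u x / b) ≤ vModular μ p (fun x => u x / a) := by
  refine lintegral_mono_ae ?_
  filter_upwards [hp] with x hx
  refine ENNReal.ofReal_le_ofReal (Real.rpow_le_rpow (abs_nonneg _) ?_ hx)
  rw [abs_div, abs_div, abs_of_pos ha, abs_of_pos (ha.trans_le hab)]
  gcongr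

lemma vModular_div_le_one_of_luxNorm_lt {pm : ℝ} (hpm0 : 0 < pm) (hpm : ∀ᵐ x ∂μ, pm ≤ p x)
    {u : α → ℝ} (hu : vModular μ p u < ⊤) {lam : ℝ} (hlam : luxNorm μ p u < lam) :
    vModular μ p (fun x => u x / lam) ≤ 1 := by
  obtain ⟨a, ⟨ha0, ha⟩, hal⟩ := (csInf_lt_iff ⟨0, fun b hb => hb.1.le⟩
    (luxNorm_admissible_nonempty hpm0 hpm hu)).mp hlam
  have hp0 : ∀ᵐ x ∂μ, 0 ≤ p x := hpm.mono fun x hx => hpm0.le.trans hx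
  exact (vModular_div_anti hp0 u ha0 hal.le).trans ha

lemma luxNorm_nonneg (u : α → ℝ) : 0 ≤ luxNorm μ p u :=
  Real.sInf_nonneg fun _ hlam => hlam.1.le

lemma luxNorm_le_of_vModular_div_le_one {u : α → ℝ} {lam : ℝ} (hlam : 0 < lam)
    (h : vModular μ p (fun x => u x / lam) ≤ 1) : luxNorm μ p u ≤ lam :=
  csInf_le ⟨0, fun _ hb => hb.1.le⟩ ⟨hlam, h⟩

end Luxemburg

theorem power_operator_bound_general {α : Type*} [MeasurableSpace α] (μ : Measure α)
    (p : α → ℝ) (hp : Measurable p) (pm pp : ℝ) (hpm : 1 < pm)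
    (hae : ∀ᵐ x ∂μ, pm ≤ p x ∧ p x ≤ pp)
    (v : α → ℝ) (hv : MemVLp μ p v) :
    MemVLp μ (fun x => p x / (p x - 1)) (fun x => |v x| ^ (p x - 2) * v x) ∧
    luxNorm μ (fun x => p x / (p x - 1)) (fun x => |v x| ^ (p x - 2) * v x)
      ≤ (luxNorm μ p v + 1) ^ (pp - 1) := by
  obtain ⟨hvm, hvfin⟩ := hv
  have hp1 : ∀ᵐ x ∂μ, 1 < p x ∧ p x ≤ pp := hae.mono fun x hx => ⟨hpm.trans_le hx.1, hx.2⟩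
  have hmod : vModular μ (fun x => p x / (p x - 1)) (fun x => |v x| ^ (p x - 2) * v x)
      = vModular μ p v := lintegral_congr_ae <| hp1.mono fun x hx => by
    simp only [abs_rpow_sub_two_mul_self_rpow_conj hx.1]
  have hZm : AEMeasurable (fun x => |v x| ^ (p x - 2) * v x) μ :=
    (hvm.abs.pow (hp.sub measurable_const).aemeasurable).mul hvm
  set N := luxNorm μ p v
  have hN : 1 ≤ N + 1 := le_add_of_nonneg_left (luxNorm_nonneg v)
  refine ⟨⟨hZm, hmod ▸ hvfin⟩,
    luxNorm_le_of_vModular_div_le_one (Real.rpow_pos_of_pos (one_pos.trans_le hN) _) ?_⟩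
  refine le_trans (lintegral_mono_ae ?_)
    (vModular_div_le_one_of_luxNorm_lt (by linarith) (hae.mono fun x hx => hx.1) hvfin
      (lt_add_one N))
  filter_upwards [hp1] with x hx
  exact ENNReal.ofReal_le_ofReal <| abs_rpow_sub_two_mul_self_div_rpow_conj_le hx.1 hx.2 hN (v x)

/-- boundedness of the variable-exponent power operator. -/
theorem power_operator_bound {α : Type*} [MeasurableSpace α] (μ : Measure α)
    (p : α → ℝ) (hp : Measurable p) (pm pp : ℝ) (hpm : 1 < pm) (hmp : pm ≤ pp)
    (hae : ∀ᵐ x ∂μ, pm ≤ p x ∧ p x ≤ pp)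
    (v : α → ℝ) (hv : MemVLp μ p v) :
    MemVLp μ (fun x => p x / (p x - 1)) (fun x => |v x| ^ (p x - 2) * v x) ∧
    luxNorm μ (fun x => p x / (p x - 1)) (fun x => |v x| ^ (p x - 2) * v x)
      ≤ (luxNorm μ p v + 1) ^ (pp - 1) :=
  power_operator_bound_general μ p hp pm pp hpm hae v hv
end
end

section
/- Let $V = L^{p(x)}(\Omega)$ with $1 < p^- \leq p^+ < \infty$, and let $A \subseteq V \times V^*$ be a maximal monotone operator. For $\lambda > 0$ define the modified resolvent $J_\lambda u := u_\lambda$, the unique solution of $Z_\Omega((u_\lambda - u)/\lambda) + A(u_\lambda) \ni 0$, and the modified Yosida approximation $A_\lambda(u) := Z_\Omega((u - J_\lambda u)/\lambda)$, where $(Z_\Omega v)(x) = |v(x)|^{p(x)-2}v(x)$. Then for every $[u,\eta] \in A$ and every $\lambda > 0$: $\int_\Omega \frac{1}{p'(x)}|A_\lambda u(x)|^{p'(x)}\,dx \leq \int_\Omega \frac{1}{p'(x)}|\eta(x)|^{p'(x)}\,dx$. -/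
open MeasureTheory Filter Set
open scoped ENNReal Topology

noncomputable section

/-! Write `v = (u - J_λ u)/λ` and `ζ = |v|^{p-2} v = A_λ u`. Then `ζ v = |v|^p` and
`|ζ|^{p'} = |v|^p`, so monotonicity of `A` at `[u, η]` and `[J_λ u, ζ]` gives `∫ (η v - |v|^p) ≥ 0`,
while Young's inequality gives `|v|^p / p' + (η v - |v|^p) ≤ |η|^{p'} / p'` pointwise. -/

theorem abs_rpow_sub_two_mul_self_mul_self {q : ℝ} (hq : q ≠ 0) (w : ℝ) :
    |w| ^ (q - 2) * w * w = |w| ^ q := by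
  rcases eq_or_ne w 0 with rfl | hw
  · simp [Real.zero_rpow hq]
  · rw [mul_assoc, ← abs_mul_abs_self, ← sq, ← Real.rpow_natCast,
      ← Real.rpow_add (abs_pos.2 hw)]
    norm_num

theorem abs_abs_rpow_sub_two_mul_self {q : ℝ} (hq : q ≠ 1) (w : ℝ) :
    |(|w| ^ (q - 2) * w)| = |w| ^ (q - 1) := by
  rcases eq_or_ne w 0 with rfl | hw
  · simp [Real.zero_rpow (sub_ne_zero.2 hq)]
  · rw [abs_mul, abs_of_nonneg (by positivity), ← Real.rpow_add_one (abs_ne_zero.2 hw)]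
    ring_nf

theorem abs_abs_rpow_sub_two_mul_self_rpow_conjExponent {q : ℝ} (hq : 1 < q) (w : ℝ) :
    |(|w| ^ (q - 2) * w)| ^ (q / (q - 1)) = |w| ^ q := by
  rw [abs_abs_rpow_sub_two_mul_self hq.ne', ← Real.rpow_mul (abs_nonneg w),
    mul_div_cancel₀ _ (sub_ne_zero.2 hq.ne')]

theorem young_inequality_conjExponent {p : ℝ} (hp : 1 < p) (a b : ℝ) :
    a * b ≤ (p - 1) / p * |a| ^ (p / (p - 1)) + |b| ^ p / p := by
  have h := Real.young_inequality a b (Real.HolderConjugate.conjExponent hp).symm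
  rw [Real.conjExponent, div_div_eq_mul_div] at h
  convert h using 2
  ring

theorem rpow_le_max_one_rpow_mul_add {w a b c p pp : ℝ} (hp : 0 ≤ p)
    (hpp : p ≤ pp) (hw : |w| ≤ c * max |a| |b|) :
    |w| ^ p ≤ max 1 c ^ pp * (|a| ^ p + |b| ^ p) := by
  have hM : 0 ≤ max |a| |b| := le_max_of_le_left (abs_nonneg a)
  have hmax : max |a| |b| ^ p ≤ |a| ^ p + |b| ^ p := by
    rcases max_cases |a| |b| with ⟨h, -⟩ | ⟨h, -⟩ <;> rw [h] <;>
      linarith [Real.rpow_nonneg (abs_nonneg a) p, Real.rpow_nonneg (abs_nonneg b) p]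
  calc |w| ^ p ≤ (max 1 c * max |a| |b|) ^ p :=
        Real.rpow_le_rpow (abs_nonneg w)
          (hw.trans (mul_le_mul_of_nonneg_right (le_max_right 1 c) hM)) hp
    _ = max 1 c ^ p * max |a| |b| ^ p := Real.mul_rpow (by positivity) hM
    _ ≤ max 1 c ^ pp * (|a| ^ p + |b| ^ p) :=
        mul_le_mul (Real.rpow_le_rpow_of_exponent_le (le_max_left 1 c) hpp) hmax
          (by positivity) (by positivity)

namespace MemVLp

variable {α : Type*} [MeasurableSpace α] {μ : Measure α} {p : α → ℝ} {u w η : α → ℝ}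

theorem integrable_rpow (hu : MemVLp μ p u) (hp : AEMeasurable p μ) :
    Integrable (fun x => |u x| ^ p x) μ :=
  ⟨(hu.1.abs.pow hp).aestronglyMeasurable,
    (hasFiniteIntegral_iff_ofReal (ae_of_all _ fun x => by positivity)).2 hu.2⟩

theorem of_abs_le_mul_max {pp c : ℝ} {v : α → ℝ} (hpm : AEMeasurable p μ)
    (hp : ∀ᵐ x ∂μ, 0 ≤ p x ∧ p x ≤ pp) (hu : MemVLp μ p u) (hw : MemVLp μ p w)
    (hv : AEMeasurable v μ) (hle : ∀ᵐ x ∂μ, |v x| ≤ c * max |u x| |w x|) : MemVLp μ p v := by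
  refine ⟨hv, lt_of_le_of_lt (lintegral_mono_ae (g := fun x => ENNReal.ofReal (max 1 c ^ pp) *
    (ENNReal.ofReal (|u x| ^ p x) + ENNReal.ofReal (|w x| ^ p x))) ?_) ?_⟩
  · filter_upwards [hp, hle] with x ⟨hp0, hpp⟩ hx
    rw [← ENNReal.ofReal_add (by positivity) (by positivity), ← ENNReal.ofReal_mul (by positivity)]
    exact ENNReal.ofReal_le_ofReal (rpow_le_max_one_rpow_mul_add hp0 hpp hx)
  · rw [lintegral_const_mul' _ _ ENNReal.ofReal_ne_top,
      lintegral_add_left' (hu.1.abs.pow hpm).ennreal_ofReal]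
    exact ENNReal.mul_lt_top ENNReal.ofReal_lt_top (ENNReal.add_lt_top.2 ⟨hu.2, hw.2⟩)

theorem sub_div (hpm : AEMeasurable p μ) {pp : ℝ} (hp : ∀ᵐ x ∂μ, 0 ≤ p x ∧ p x ≤ pp)
    (hu : MemVLp μ p u) (hw : MemVLp μ p w) (c : ℝ) :
    MemVLp μ p (fun x => (u x - w x) / c) := by
  refine hu.of_abs_le_mul_max (c := 2 / |c|) hpm hp hw ((hu.1.sub hw.1).div_const c)
    (ae_of_all _ fun x => ?_)
  rw [abs_div, div_mul_eq_mul_div]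
  refine div_le_div_of_nonneg_right ((abs_sub _ _).trans ?_) (abs_nonneg c)
  linarith [le_max_left |u x| |w x|, le_max_right |u x| |w x|]

theorem integrable_mul (hpm : AEMeasurable p μ) (hp : ∀ᵐ x ∂μ, 1 < p x)
    (hη : MemVLp μ (fun x => p x / (p x - 1)) η) (hu : MemVLp μ p u) :
    Integrable (fun x => η x * u x) μ := by
  refine ((hη.integrable_rpow (hpm.div (hpm.sub_const 1))).add (hu.integrable_rpow hpm)).mono'
    (hη.1.mul hu.1).aestronglyMeasurable ?_
  filter_upwards [hp] with x hx
  have hyoung := young_inequality_conjExponent hx |η x| |u x|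
  rw [abs_abs, abs_abs] at hyoung
  have hcoef : (p x - 1) / p x * |η x| ^ (p x / (p x - 1)) ≤ |η x| ^ (p x / (p x - 1)) :=
    mul_le_of_le_one_left (by positivity) ((div_le_one (by linarith)).2 (by linarith))
  have hdiv : |u x| ^ p x / p x ≤ |u x| ^ p x := div_le_self (by positivity) hx.le
  rw [Real.norm_eq_abs, abs_mul, Pi.add_apply]
  linarith

end MemVLp

theorem ofReal_integral_le_lintegral_ofReal {α : Type*} [MeasurableSpace α] {μ : Measure α}
    (f : α → ℝ) : ENNReal.ofReal (∫ x, f x ∂μ) ≤ ∫⁻ x, ENNReal.ofReal (f x) ∂μ := by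
  by_cases hf : Integrable f μ
  · rw [integral_eq_lintegral_pos_part_sub_lintegral_neg_part hf]
    exact ENNReal.ofReal_le_of_le_toReal (sub_le_self _ ENNReal.toReal_nonneg)
  · simp [integral_undef hf]

theorem lintegral_ofReal_le_of_add_le {α : Type*} [MeasurableSpace α] {μ : Measure α}
    {f g h : α → ℝ} (hf : 0 ≤ᵐ[μ] f) (hg : Integrable g μ) (hh : Integrable h μ)
    (hh0 : 0 ≤ ∫ x, h x ∂μ) (hfg : ∀ᵐ x ∂μ, f x + h x ≤ g x) :
    ∫⁻ x, ENNReal.ofReal (f x) ∂μ ≤ ∫⁻ x, ENNReal.ofReal (g x) ∂μ :=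
  calc ∫⁻ x, ENNReal.ofReal (f x) ∂μ ≤ ∫⁻ x, ENNReal.ofReal (g x - h x) ∂μ :=
        lintegral_mono_ae (hfg.mono fun x hx => ENNReal.ofReal_le_ofReal (by linarith))
    _ = ENNReal.ofReal (∫ x, g x - h x ∂μ) := by
        refine (ofReal_integral_eq_lintegral_ofReal (hg.sub hh) ?_).symm
        filter_upwards [hf, hfg] with x (hx : 0 ≤ f x) hxg
        exact sub_nonneg.2 (by linarith)
    _ ≤ ENNReal.ofReal (∫ x, g x ∂μ) := by
        rw [integral_sub hg hh]
        exact ENNReal.ofReal_le_ofReal (by linarith)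
    _ ≤ ∫⁻ x, ENNReal.ofReal (g x) ∂μ := ofReal_integral_le_lintegral_ofReal g

theorem yosida_modular_bound_general {α : Type*} [MeasurableSpace α] (μ : Measure α)
    (p : α → ℝ) (hp : Measurable p) (pm pp : ℝ) (h1 : 1 < pm)
    (hae : ∀ᵐ x ∂μ, pm ≤ p x ∧ p x ≤ pp)
    (A : Set ((α → ℝ) × (α → ℝ)))
    (hmono : ∀ q ∈ A, ∀ r ∈ A, 0 ≤ ∫ x, (q.2 x - r.2 x) * (q.1 x - r.1 x) ∂μ)
    (lam : ℝ) (hlam : 0 < lam)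
    (u η ulam : α → ℝ)
    (hu : MemVLp μ p u) (hul : MemVLp μ p ulam)
    (hη : MemVLp μ (fun x => p x / (p x - 1)) η)
    (huA : (u, η) ∈ A)
    (hres : (ulam,
        fun x => |(u x - ulam x) / lam| ^ (p x - 2) * ((u x - ulam x) / lam)) ∈ A) :
    (∫⁻ x, ENNReal.ofReal (((p x - 1) / p x) *
        |(|(u x - ulam x) / lam| ^ (p x - 2) * ((u x - ulam x) / lam))|
          ^ (p x / (p x - 1))) ∂μ)
      ≤ ∫⁻ x, ENNReal.ofReal (((p x - 1) / p x) * |η x| ^ (p x / (p x - 1))) ∂μ := by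
  set v : α → ℝ := fun x => (u x - ulam x) / lam
  have hp1 : ∀ᵐ x ∂μ, 1 < p x := hae.mono fun x hx => h1.trans_le hx.1
  have hv : MemVLp μ p v :=
    hu.sub_div hp.aemeasurable (hae.mono fun x hx => ⟨by linarith [hx.1], hx.2⟩) hul lam
  have hpair : 0 ≤ ∫ x, η x * v x - |v x| ^ p x ∂μ := by
    have hlin : ∫ x, (η x - |v x| ^ (p x - 2) * v x) * (u x - ulam x) ∂μ =
        lam * ∫ x, η x * v x - |v x| ^ p x ∂μ := by
      rw [← integral_const_mul]
      refine integral_congr_ae (hp1.mono fun x hx => ?_)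
      have hdiff : u x - ulam x = lam * v x := (mul_div_cancel₀ _ hlam.ne').symm
      simp only [hdiff, ← abs_rpow_sub_two_mul_self_mul_self (by linarith : p x ≠ 0) (v x)]
      ring
    have hmono_pair := hmono _ huA _ hres
    rw [hlin] at hmono_pair
    exact nonneg_of_mul_nonneg_right hmono_pair hlam
  have hcoef : ∀ᵐ x ∂μ, 0 ≤ (p x - 1) / p x ∧ (p x - 1) / p x ≤ 1 := hp1.mono fun x hx =>
    ⟨div_nonneg (by linarith) (by linarith), (div_le_one (by linarith)).2 (by linarith)⟩
  refine lintegral_ofReal_le_of_add_le (hcoef.mono fun x hx => mul_nonneg hx.1 (by positivity))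
    ((hη.integrable_rpow (hp.div (hp.sub_const 1)).aemeasurable).bdd_mul
      ((hp.sub_const 1).div hp).aestronglyMeasurable
      (hcoef.mono fun x hx => (Real.norm_of_nonneg hx.1).trans_le hx.2))
    ((hη.integrable_mul hp.aemeasurable hp1 hv).sub (hv.integrable_rpow hp.aemeasurable))
    hpair (hp1.mono fun x hx => ?_)
  have hsplit : (p x - 1) / p x * |v x| ^ p x = |v x| ^ p x - |v x| ^ p x / p x := by
    field_simp
  rw [abs_abs_rpow_sub_two_mul_self_rpow_conjExponent hx, Pi.sub_apply]
  linarith [young_inequality_conjExponent hx (η x) (v x)]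

/-- modular bound for the modified Yosida approximation
`A_λ u = Z((u - J_λ u)/λ)` of a monotone operator `A`:
`∫ |A_λ u|^{p'(x)}/p'(x) ≤ ∫ |η|^{p'(x)}/p'(x)` whenever `[u,η] ∈ A`. -/
theorem yosida_modular_bound {α : Type*} [MeasurableSpace α] (μ : Measure α)
    (p : α → ℝ) (hp : Measurable p) (pm pp : ℝ) (h1 : 1 < pm) (hmp : pm ≤ pp)
    (hae : ∀ᵐ x ∂μ, pm ≤ p x ∧ p x ≤ pp)
    (A : Set ((α → ℝ) × (α → ℝ)))
    (hmono : ∀ q ∈ A, ∀ r ∈ A, 0 ≤ ∫ x, (q.2 x - r.2 x) * (q.1 x - r.1 x) ∂μ)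
    (lam : ℝ) (hlam : 0 < lam)
    (u η ulam : α → ℝ)
    (hu : MemVLp μ p u) (hul : MemVLp μ p ulam)
    (hη : MemVLp μ (fun x => p x / (p x - 1)) η)
    (huA : (u, η) ∈ A)
    (hres : (ulam,
        fun x => |(u x - ulam x) / lam| ^ (p x - 2) * ((u x - ulam x) / lam)) ∈ A) :
    (∫⁻ x, ENNReal.ofReal (((p x - 1) / p x) *
        |(|(u x - ulam x) / lam| ^ (p x - 2) * ((u x - ulam x) / lam))|
          ^ (p x / (p x - 1))) ∂μ)
      ≤ ∫⁻ x, ENNReal.ofReal (((p x - 1) / p x) * |η x| ^ (p x / (p x - 1))) ∂μ :=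
  yosida_modular_bound_general μ p hp pm pp h1 hae A hmono lam hlam u η ulam hu hul hη huA hres
end
end
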